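/- arXiv:1605.01645 — 4 statements merged into one kernel-verified Lean document; each statement's English description precedes it below -/
import Mathlib

section
/- Let A be a finite-dimensional associative real *-algebra with unit and nonempty imaginary sphere S_A, with quadratic cone Q_A, real part re(q) = (q + q^c)/2 and imaginary part im(q) = (q - q^c)/2. Then Q_A = ℝ ∪ {q ∈ A : re(q) ∈ ℝ, q q^c ∈ ℝ, q q^c > re(q)²}. In particular, if q ∈ Q_A \ ℝ, then im(q)·im(q)^c is a positive real number, j := im(q)/√(im(q)·im(q)^c) belongs to S_A, and q = re(q) + √(im(q)·im(q)^c)·j ∈ ℂ_j. -/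
open MulOpposite

/-- The imaginary sphere of a real *-algebra: `{q : q^c = -q, q² = -1}`. -/
def SA (A : Type*) [Ring A] [StarRing A] : Set A := {q | star q = -q ∧ q ^ 2 = -1}

/-- The slice `ℂ_j`: the real subspace of `A` spanned by `1` and `j`. -/
def Cslice (A : Type*) [Ring A] [Algebra ℝ A] (j : A) : Submodule ℝ A :=
  Submodule.span ℝ {1, j}

/-- The quadratic cone `Q_A = ⋃_{j ∈ S_A} ℂ_j`. -/
def QA (A : Type*) [Ring A] [Algebra ℝ A] [StarRing A] : Set A :=
  ⋃ j ∈ SA A, (Cslice A j : Set A)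

/-- The real part `re(q) = (q + q^c)/2`. -/
noncomputable def reA {A : Type*} [Ring A] [Algebra ℝ A] [StarRing A] (q : A) : A :=
  (2 : ℝ)⁻¹ • (q + star q)

/-- The imaginary part `im(q) = (q - q^c)/2`. -/
noncomputable def imA {A : Type*} [Ring A] [Algebra ℝ A] [StarRing A] (q : A) : A :=
  (2 : ℝ)⁻¹ • (q - star q)

section Aux
variable {A : Type*} [Ring A] [Algebra ℝ A] [StarRing A] [StarModule ℝ A]

set_option linter.unusedSectionVars false

lemma re_add_im' (q : A) : reA q + imA q = q := by
  unfold reA imA; module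

lemma star_imA' (q : A) : star (imA q) = - imA q := by
  simp only [imA, star_smul, star_sub, star_star, star_trivial]
  module

lemma key' (q : A) (r s : ℝ) (h1 : reA q = algebraMap ℝ A r)
    (h2 : q * star q = algebraMap ℝ A s) (h3 : r ^ 2 < s) :
    ∃ t : ℝ, 0 < t ∧ imA q * star (imA q) = algebraMap ℝ A t ∧
      (Real.sqrt t)⁻¹ • imA q ∈ SA A ∧
      q = reA q + Real.sqrt t • ((Real.sqrt t)⁻¹ • imA q) ∧
      q ∈ (Cslice A ((Real.sqrt t)⁻¹ • imA q) : Set A) := by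
  set t : ℝ := s - r ^ 2 with ht
  have htpos : 0 < t := by linarith
  have hsq : Real.sqrt t ^ 2 = t := Real.sq_sqrt htpos.le
  have hsne : Real.sqrt t ≠ 0 := by positivity
  have hp : imA q = q - algebraMap ℝ A r := by
    rw [← h1, eq_sub_iff_add_eq, add_comm]; exact re_add_im' q
  have hstarq : star q = algebraMap ℝ A (2 * r) - q := by
    have : (2 : ℝ)⁻¹ • (q + star q) = algebraMap ℝ A r := h1
    have h2' : q + star q = (2 : ℝ) • algebraMap ℝ A r := by
      rw [← this, smul_smul]; norm_num
    rw [eq_sub_iff_add_eq, add_comm, h2']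
    simp [Algebra.smul_def, ← map_mul]
  have hqq : q * q = algebraMap ℝ A (2 * r) * q - algebraMap ℝ A s := by
    have h := h2
    rw [hstarq, mul_sub, ← Algebra.commutes (2 * r) q] at h
    rw [← h]; abel
  have hps : imA q * star (imA q) = algebraMap ℝ A t := by
    rw [star_imA', hp, mul_neg, sub_mul, mul_sub, mul_sub, hqq]
    simp only [Algebra.algebraMap_eq_smul_one, smul_mul_assoc, mul_smul_comm, one_mul, mul_one]
    rw [ht]
    module
  have hpp : imA q * imA q = algebraMap ℝ A (-t) := by
    have := hps
    rw [star_imA', mul_neg, neg_eq_iff_eq_neg, ← map_neg] at this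
    exact this
  set j : A := (Real.sqrt t)⁻¹ • imA q with hj
  have hjS : j ∈ SA A := by
    constructor
    · rw [hj, star_smul, star_trivial, star_imA', smul_neg]
    · rw [hj, pow_two, smul_mul_smul_comm, hpp, ← mul_inv, Real.mul_self_sqrt htpos.le,
        Algebra.smul_def, ← map_mul, show t⁻¹ * -t = -1 by field_simp, map_neg, map_one]
  have hback : Real.sqrt t • j = imA q := by
    rw [hj, smul_smul, mul_inv_cancel₀ hsne, one_smul]
  refine ⟨t, htpos, hps, hjS, ?_, ?_⟩
  · rw [hback, re_add_im' q]
  · refine Submodule.mem_span_pair.mpr ⟨r, Real.sqrt t, ?_⟩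
    rw [hback, ← Algebra.algebraMap_eq_smul_one, ← h1, re_add_im' q]

end Aux

/-- Characterization of the quadratic cone:
`Q_A = ℝ ∪ {q : re(q) ∈ ℝ, q q^c ∈ ℝ, q q^c > re(q)²}`; moreover for `q ∈ Q_A \ ℝ`,
`im(q)·im(q)^c` is a positive real `t`, `j := im(q)/√t ∈ S_A` and `q = re(q) + √t · j ∈ ℂ_j`. -/
theorem stmt5 {A : Type*} [Ring A] [Algebra ℝ A] [StarRing A] [StarModule ℝ A]
    [FiniteDimensional ℝ A] [Nontrivial A] (hS : (SA A).Nonempty) :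
    (QA A = Set.range (algebraMap ℝ A) ∪
      {q | ∃ r s : ℝ, reA q = algebraMap ℝ A r ∧ q * star q = algebraMap ℝ A s ∧ r ^ 2 < s}) ∧
    ∀ q ∈ QA A, q ∉ Set.range (algebraMap ℝ A) →
      ∃ t : ℝ, 0 < t ∧ imA q * star (imA q) = algebraMap ℝ A t ∧
        (Real.sqrt t)⁻¹ • imA q ∈ SA A ∧
        q = reA q + Real.sqrt t • ((Real.sqrt t)⁻¹ • imA q) ∧
        q ∈ (Cslice A ((Real.sqrt t)⁻¹ • imA q) : Set A) := by
  have hmain : QA A = Set.range (algebraMap ℝ A) ∪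
      {q | ∃ r s : ℝ, reA q = algebraMap ℝ A r ∧ q * star q = algebraMap ℝ A s ∧ r ^ 2 < s} := by
    ext q
    constructor
    · intro hq
      obtain ⟨j, hjS, hqj⟩ := Set.mem_iUnion₂.mp hq
      obtain ⟨a, b, hab⟩ := Submodule.mem_span_pair.mp hqj
      rcases eq_or_ne b 0 with hb | hb
      · exact Or.inl ⟨a, by rw [← hab, hb, zero_smul, add_zero, Algebra.algebraMap_eq_smul_one]⟩
      · right
        have hstarj : star j = -j := hjS.1
        have hj2 : j * j = -1 := by rw [← pow_two]; exact hjS.2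
        have hstarq : star q = a • (1 : A) - b • j := by
          rw [← hab]
          simp only [star_add, star_smul, star_trivial, star_one, hstarj, smul_neg]
          abel
        refine ⟨a, a ^ 2 + b ^ 2, ?_, ?_, ?_⟩
        · rw [reA, hstarq, ← hab, Algebra.algebraMap_eq_smul_one]
          module
        · rw [hstarq, ← hab, Algebra.algebraMap_eq_smul_one]
          simp only [add_mul, mul_sub, smul_mul_assoc, mul_smul_comm, one_mul, mul_one, hj2,
            smul_neg, smul_smul]
          module
        · have hb2 : 0 < b ^ 2 := lt_of_le_of_ne (sq_nonneg b) (Ne.symm (pow_ne_zero 2 hb))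
          linarith
    · intro hq
      rcases hq with ⟨r, hr⟩ | ⟨r, s, h1, h2, h3⟩
      · obtain ⟨j, hj⟩ := hS
        refine Set.mem_biUnion hj ?_
        exact Submodule.mem_span_pair.mpr ⟨r, 0,
          by simp [← hr, Algebra.algebraMap_eq_smul_one]⟩
      · obtain ⟨t, ht, hps, hjS, hq', hmem⟩ := key' q r s h1 h2 h3
        exact Set.mem_biUnion hjS hmem
  refine ⟨hmain, ?_⟩
  intro q hq hnr
  rcases (hmain ▸ hq) with h | h
  · exact absurd h hnr
  · obtain ⟨r, s, h1, h2, h3⟩ := h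
    exact key' q r s h1 h2 h3
end

section
/- Let A be a real *-algebra as above, let D ⊆ ℂ be invariant under complex conjugation, and let X be a Banach two-sided A-module. If f : Ω_D → X is a right slice function induced by the stem function F = (F₁, F₂), then for every z ∈ D, j ∈ S_A, and q = φ_j(z), one has F₁(z) = (f(q) + f(q^c))/2 and F₂(z) = -((f(q) - f(q^c))/2)·j; consequently the representation formula f(r + s·k) = (f(q) + f(q^c))/2 - ((f(q) - f(q^c))/2)·j·k holds for q = r + s·j ∈ Ω_D, r, s ∈ ℝ and j, k ∈ S_A. -/
open MulOpposite ComplexConjugate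

/-- The slice embedding `φ_j : ℂ → ℂ_j`, `φ_j(r + s i) = r + s·j`. -/
def phi {A : Type*} [Ring A] [Algebra ℝ A] (j : A) (z : ℂ) : A :=
  algebraMap ℝ A z.re + z.im • j

/-- The circular set `Ω_D = ⋃_{j ∈ S_A} φ_j(D)`. -/
def OmegaD (A : Type*) [Ring A] [Algebra ℝ A] [StarRing A] (D : Set ℂ) : Set A :=
  {q | ∃ z ∈ D, ∃ j ∈ SA A, q = phi j z}

/-- Formulas recovering the stem function of a right slice function, and the resulting
representation formula `f(r + s·k) = (f(q)+f(q^c))/2 - ((f(q)-f(q^c))/2)·j·k` for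
`q = r + s·j`. -/
theorem stmt11 {A : Type*} [Ring A] [Algebra ℝ A] [StarRing A] [StarModule ℝ A]
    [FiniteDimensional ℝ A] [Nontrivial A]
    {X : Type*} [AddCommGroup X] [Module ℝ X] [Module A X] [Module Aᵐᵒᵖ X]
    [IsScalarTower ℝ A X] [SMulCommClass ℝ Aᵐᵒᵖ X]
    (D : Set ℂ) (hD : ∀ z ∈ D, conj z ∈ D)
    (f : A → X) (F₁ F₂ : ℂ → X)
    (hF₁ : ∀ z, F₁ (conj z) = F₁ z) (hF₂ : ∀ z, F₂ (conj z) = -F₂ z)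
    (hf : ∀ z ∈ D, ∀ j ∈ SA A, f (phi j z) = F₁ z + op j • F₂ z) :
    (∀ z ∈ D, ∀ j ∈ SA A,
      F₁ z = (2 : ℝ)⁻¹ • (f (phi j z) + f (star (phi j z))) ∧
      F₂ z = -(op j • ((2 : ℝ)⁻¹ • (f (phi j z) - f (star (phi j z)))))) ∧
    (∀ r s : ℝ, ∀ j ∈ SA A, ∀ k ∈ SA A, (⟨r, s⟩ : ℂ) ∈ D →
      f (algebraMap ℝ A r + s • k) =
        (2 : ℝ)⁻¹ • (f (phi j ⟨r, s⟩) + f (star (phi j ⟨r, s⟩))) -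
          op k • (op j • ((2 : ℝ)⁻¹ • (f (phi j ⟨r, s⟩) - f (star (phi j ⟨r, s⟩)))))) := by
  have star_phi : ∀ j ∈ SA A, ∀ z : ℂ, star (phi j z) = phi j (conj z) := by
    intro j hj z
    simp only [phi, star_add, star_smul, hj.1, smul_neg, star_trivial]
    rw [show star (algebraMap ℝ A z.re) = algebraMap ℝ A z.re by
      rw [Algebra.algebraMap_eq_smul_one, star_smul, star_one, star_trivial]]
    simp [Complex.conj_re, Complex.conj_im, sub_eq_add_neg]
  have key : ∀ z ∈ D, ∀ j ∈ SA A,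
      F₁ z = (2 : ℝ)⁻¹ • (f (phi j z) + f (star (phi j z))) ∧
      F₂ z = -(op j • ((2 : ℝ)⁻¹ • (f (phi j z) - f (star (phi j z))))) := by
    intro z hz j hj
    have h1 := hf z hz j hj
    have h2 := hf (conj z) (hD z hz) j hj
    rw [hF₁, hF₂, smul_neg, ← sub_eq_add_neg] at h2
    rw [star_phi j hj z]
    constructor
    · rw [h1, h2]
      have : F₁ z + op j • F₂ z + (F₁ z - op j • F₂ z) = (2 : ℝ) • F₁ z := by
        rw [two_smul]; abel
      rw [this, smul_smul]; norm_num
    · rw [h1, h2]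
      have : F₁ z + op j • F₂ z - (F₁ z - op j • F₂ z) = (2 : ℝ) • (op j • F₂ z) := by
        rw [two_smul]; abel
      rw [this, smul_smul]
      norm_num
      rw [smul_smul, ← op_mul, ← pow_two, hj.2]
      simp
  refine ⟨key, ?_⟩
  intro r s j hj k hk hz
  obtain ⟨e1, e2⟩ := key ⟨r, s⟩ hz j hj
  have := hf ⟨r, s⟩ hz k hk
  rw [show phi k ⟨r, s⟩ = algebraMap ℝ A r + s • k from rfl] at this
  rw [this, e1, e2, smul_neg]
  abel
end

section
/- Let D ⊆ ℂ be open, connected, and invariant under complex conjugation, and let f : Ω_D → X be a right slice regular function with values in a Banach two-sided A-module X. If f(q) = 0 for all q ∈ Ω_D ∩ ℝ, then f is identically zero on Ω_D. -/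
/-!
Testing `f` against real functionals `ℓ` reduces the claim to scalars: the Cauchy–Riemann system
makes `ℓ ∘ F₁ + i (ℓ ∘ F₂)` holomorphic on `D`. Since `D` is connected and conjugation invariant,
`im '' D` is an interval symmetric about `0`, so `D` meets the real axis in a nonempty open subset
of `ℝ`. There `F₂` vanishes by oddness and `F₁ = f` vanishes by hypothesis, so the identity theorem
kills `ℓ ∘ F₁ + i (ℓ ∘ F₂)` on all of `D`, and Hahn–Banach gives `F₁ = F₂ = 0` on `D`.
-/

open MulOpposite ComplexConjugate

open Complex Filter Topology

theorem HasFDerivAt.differentiableAt_ofReal_add_mul_I {u v : ℂ → ℝ} {u' v' : ℂ →L[ℝ] ℝ} {x : ℂ}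
    (hu : HasFDerivAt u u' x) (hv : HasFDerivAt v v' x)
    (h₁ : u' 1 = v' I) (h₂ : u' I = -v' 1) :
    DifferentiableAt ℂ (fun z => (u z : ℂ) + v z * I) x := by
  have hg := (ofRealCLM.hasFDerivAt.comp x hu).add
    ((ofRealCLM.hasFDerivAt.comp x hv).mul_const I)
  refine (hg.complexOfReal_hasFDerivAt ?_).differentiableAt
  simp only [add_apply, smul_apply, ContinuousLinearMap.comp_apply, ofRealCLM_apply, h₁, h₂,
    smul_eq_mul]
  push_cast
  linear_combination -(v' 1 : ℂ) * I_sq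

theorem differentiableOn_dual_add_mul_I_of_cauchyRiemann {X : Type*} [NormedAddCommGroup X]
    [NormedSpace ℝ X] {F₁ F₂ : ℂ → X} {D : Set ℂ} (hD : IsOpen D)
    (hdiff₁ : DifferentiableOn ℝ F₁ D) (hdiff₂ : DifferentiableOn ℝ F₂ D)
    (hCR₁ : ∀ z ∈ D, fderiv ℝ F₁ z 1 = fderiv ℝ F₂ z I)
    (hCR₂ : ∀ z ∈ D, fderiv ℝ F₁ z I = -(fderiv ℝ F₂ z 1)) (ℓ : StrongDual ℝ X) :
    DifferentiableOn ℂ (fun z => (ℓ (F₁ z) : ℂ) + ℓ (F₂ z) * I) D := by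
  intro z hz
  have hasDeriv {F : ℂ → X} (hF : DifferentiableOn ℝ F D) :
      HasFDerivAt (fun w => ℓ (F w)) (ℓ.comp (fderiv ℝ F z)) z :=
    ℓ.hasFDerivAt.comp z (hF.differentiableAt (hD.mem_nhds hz)).hasFDerivAt
  refine (HasFDerivAt.differentiableAt_ofReal_add_mul_I (hasDeriv hdiff₁) (hasDeriv hdiff₂)
    ?_ ?_).differentiableWithinAt
  · exact congrArg ℓ (hCR₁ z hz)
  · exact (congrArg ℓ (hCR₂ z hz)).trans (map_neg ℓ _)

theorem IsConnected.exists_ofReal_mem_of_conj_mem {D : Set ℂ} (hD : IsConnected D)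
    (hconj : ∀ z ∈ D, conj z ∈ D) : ∃ r : ℝ, (r : ℂ) ∈ D := by
  obtain ⟨z, hz⟩ := hD.nonempty
  have hIm : (im '' D).OrdConnected :=
    (hD.isPreconnected.image _ continuous_im.continuousOn).ordConnected
  obtain ⟨w, hw, hw0⟩ : (0 : ℝ) ∈ im '' D := by
    refine hIm.uIcc_subset (Set.mem_image_of_mem _ hz) (Set.mem_image_of_mem _ (hconj z hz)) ?_
    rw [conj_im, Set.mem_uIcc]
    rcases le_total z.im 0 with h | h
    · exact .inl ⟨h, neg_nonneg.mpr h⟩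
    · exact .inr ⟨neg_nonpos.mpr h, h⟩
  refine ⟨w.re, ?_⟩
  convert hw
  exact Complex.ext rfl hw0.symm

theorem AnalyticOnNhd.eqOn_zero_of_forall_ofReal {g : ℂ → ℂ} {D : Set ℂ}
    (hg : AnalyticOnNhd ℂ g D) (hD : IsPreconnected D) (hDo : IsOpen D) {r₀ : ℝ}
    (hr₀ : (r₀ : ℂ) ∈ D) (hzero : ∀ r : ℝ, (r : ℂ) ∈ D → g r = 0) : Set.EqOn g 0 D := by
  refine hg.eqOn_zero_of_preconnected_of_frequently_eq_zero hD hr₀ ?_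
  have hofReal : Tendsto ofReal (𝓝[≠] r₀) (𝓝[≠] (r₀ : ℂ)) :=
    tendsto_nhdsWithin_of_tendsto_nhds_of_eventually_within _
      ((continuous_ofReal.tendsto r₀).mono_left nhdsWithin_le_nhds)
      (eventually_nhdsWithin_of_forall fun r hr => by simpa using hr)
  refine hofReal.frequently (Eventually.frequently ?_)
  have hmem : ∀ᶠ r : ℝ in 𝓝 r₀, (r : ℂ) ∈ D :=
    continuous_ofReal.continuousAt.preimage_mem_nhds (hDo.mem_nhds hr₀)
  filter_upwards [nhdsWithin_le_nhds hmem] with r hr using hzero r hr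

theorem eq_zero_of_cauchyRiemann_of_forall_ofReal {X : Type*} [NormedAddCommGroup X]
    [NormedSpace ℝ X] {F₁ F₂ : ℂ → X} {D : Set ℂ} (hDopen : IsOpen D) (hD : IsPreconnected D)
    (hdiff₁ : DifferentiableOn ℝ F₁ D) (hdiff₂ : DifferentiableOn ℝ F₂ D)
    (hCR₁ : ∀ z ∈ D, fderiv ℝ F₁ z 1 = fderiv ℝ F₂ z I)
    (hCR₂ : ∀ z ∈ D, fderiv ℝ F₁ z I = -(fderiv ℝ F₂ z 1)) {r₀ : ℝ} (hr₀ : (r₀ : ℂ) ∈ D)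
    (hreal : ∀ r : ℝ, (r : ℂ) ∈ D → F₁ r = 0 ∧ F₂ r = 0) {z : ℂ} (hz : z ∈ D) :
    F₁ z = 0 ∧ F₂ z = 0 := by
  have hdual (ℓ : StrongDual ℝ X) : ℓ (F₁ z) = 0 ∧ ℓ (F₂ z) = 0 := by
    have hg : AnalyticOnNhd ℂ (fun w => (ℓ (F₁ w) : ℂ) + ℓ (F₂ w) * I) D :=
      DifferentiableOn.analyticOnNhd
        (differentiableOn_dual_add_mul_I_of_cauchyRiemann hDopen hdiff₁ hdiff₂ hCR₁ hCR₂ ℓ) hDopen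
    have hgz := hg.eqOn_zero_of_forall_ofReal hD hDopen hr₀
      (fun r hr => by simp [hreal r hr]) hz
    exact ⟨by simpa using congrArg re hgz, by simpa using congrArg im hgz⟩
  exact ⟨SeparatingDual.eq_zero_of_forall_dual_eq_zero fun ℓ => (hdual ℓ).1,
    SeparatingDual.eq_zero_of_forall_dual_eq_zero fun ℓ => (hdual ℓ).2⟩

theorem eq_zero_of_forall_conj_eq_neg {X : Type*} [AddCommGroup X] [Module ℝ X] {F : ℂ → X}
    (hF : ∀ z, F (conj z) = -F z) (r : ℝ) : F r = 0 := by
  have h : F r = -F r := by simpa using hF r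
  simpa using (two_smul ℝ (F r)).trans (add_eq_zero_iff_eq_neg.mpr h)

theorem stmt12_general {A : Type*} [Ring A] [Algebra ℝ A] [StarRing A]
    {X : Type*} [NormedAddCommGroup X] [NormedSpace ℝ X]
    [Module Aᵐᵒᵖ X]
    (D : Set ℂ) (hDopen : IsOpen D) (hDconn : IsConnected D)
    (hDconj : ∀ z ∈ D, conj z ∈ D)
    (f : A → X) (F₁ F₂ : ℂ → X)
    (hF₂ : ∀ z, F₂ (conj z) = -F₂ z)
    (hf : ∀ z ∈ D, ∀ j ∈ SA A, f (phi j z) = F₁ z + op j • F₂ z)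
    (hdiff₁ : DifferentiableOn ℝ F₁ D) (hdiff₂ : DifferentiableOn ℝ F₂ D)
    (hCR₁ : ∀ z ∈ D, fderiv ℝ F₁ z 1 = fderiv ℝ F₂ z Complex.I)
    (hCR₂ : ∀ z ∈ D, fderiv ℝ F₁ z Complex.I = -(fderiv ℝ F₂ z 1))
    (hzero : ∀ r : ℝ, algebraMap ℝ A r ∈ OmegaD A D → f (algebraMap ℝ A r) = 0) :
    ∀ q ∈ OmegaD A D, f q = 0 := by
  rintro q ⟨z, hz, j, hj, rfl⟩
  have hphi (r : ℝ) : phi j r = algebraMap ℝ A r := by simp [phi]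
  have hreal (r : ℝ) (hr : (r : ℂ) ∈ D) : F₁ r = 0 ∧ F₂ r = 0 := by
    have hF₂r := eq_zero_of_forall_conj_eq_neg hF₂ r
    have hfr := hf r hr j hj
    rw [hphi, hzero r ⟨r, hr, j, hj, (hphi r).symm⟩, hF₂r, smul_zero, add_zero] at hfr
    exact ⟨hfr.symm, hF₂r⟩
  obtain ⟨r₀, hr₀⟩ := hDconn.exists_ofReal_mem_of_conj_mem hDconj
  obtain ⟨hF₁z, hF₂z⟩ := eq_zero_of_cauchyRiemann_of_forall_ofReal hDopen hDconn.isPreconnected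
    hdiff₁ hdiff₂ hCR₁ hCR₂ hr₀ hreal hz
  rw [hf z hz j hj, hF₁z, hF₂z, smul_zero, add_zero]

/-- A right slice regular function (induced by the holomorphic stem function `(F₁, F₂)`,
i.e. `(F₁,F₂)` is real-differentiable and satisfies the Cauchy–Riemann-type system
`∂F₁/∂r = ∂F₂/∂s`, `∂F₁/∂s = -∂F₂/∂r`) on a connected circular domain which vanishes on
`Ω_D ∩ ℝ` vanishes identically. -/
theorem stmt12 {A : Type*} [Ring A] [Algebra ℝ A] [StarRing A] [StarModule ℝ A]
    [FiniteDimensional ℝ A] [Nontrivial A]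
    {X : Type*} [NormedAddCommGroup X] [NormedSpace ℝ X] [CompleteSpace X]
    [Module A X] [Module Aᵐᵒᵖ X]
    (D : Set ℂ) (hDopen : IsOpen D) (hDconn : IsConnected D)
    (hDconj : ∀ z ∈ D, conj z ∈ D)
    (f : A → X) (F₁ F₂ : ℂ → X)
    (hF₁ : ∀ z, F₁ (conj z) = F₁ z) (hF₂ : ∀ z, F₂ (conj z) = -F₂ z)
    (hf : ∀ z ∈ D, ∀ j ∈ SA A, f (phi j z) = F₁ z + op j • F₂ z)
    (hdiff₁ : DifferentiableOn ℝ F₁ D) (hdiff₂ : DifferentiableOn ℝ F₂ D)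
    (hCR₁ : ∀ z ∈ D, fderiv ℝ F₁ z 1 = fderiv ℝ F₂ z Complex.I)
    (hCR₂ : ∀ z ∈ D, fderiv ℝ F₁ z Complex.I = -(fderiv ℝ F₂ z 1))
    (hzero : ∀ r : ℝ, algebraMap ℝ A r ∈ OmegaD A D → f (algebraMap ℝ A r) = 0) :
    ∀ q ∈ OmegaD A D, f q = 0 :=
  stmt12_general D hDopen hDconn hDconj f F₁ F₂ hF₂ hf hdiff₁ hdiff₂ hCR₁ hCR₂ hzero
end

section
/- Let X be a Banach two-sided A-algebra, x ∈ X, and p, q ∈ Q_A with p + q ∈ Q_A. Define exp^x(q) = Σ_{n≥0} (xⁿ/n!) qⁿ and exp^x_p(q) = Σ_{n≥0} (xⁿ/n!) (p+q)^{·_q n}, where (p+q)^{·_q n} denotes the n-th slice power in q. If x² = 0 or pq = qp, then exp^x_p(q) = exp^x(p + q). -/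
open MulOpposite

/-- The `n`-th slice power `(p+q)^{·_q n} = Σ_{k=0}^n C(n,k) p^k q^{n-k}` (slice variable `q`). -/
def slicePow {A : Type*} [Ring A] (p q : A) (n : ℕ) : A :=
  (Finset.range (n + 1)).sum fun k => n.choose k • (p ^ k * q ^ (n - k))

/-- The noncommutative exponential `exp^x(q) = Σ_{n≥0} (xⁿ/n!) qⁿ` (right multiplication
of `xⁿ/n!` by `qⁿ`). -/
noncomputable def expA {A : Type*} [Ring A] {X : Type*} [NormedRing X] [NormedAlgebra ℝ X]
    [Module Aᵐᵒᵖ X] (x : X) (q : A) : X :=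
  ∑' n : ℕ, (n.factorial : ℝ)⁻¹ • (op (q ^ n) • x ^ n)

/-- The slice-translated exponential `exp^x_p(q) = Σ_{n≥0} (xⁿ/n!) (p+q)^{·_q n}`. -/
noncomputable def expAp {A : Type*} [Ring A] {X : Type*} [NormedRing X] [NormedAlgebra ℝ X]
    [Module Aᵐᵒᵖ X] (x : X) (p q : A) : X :=
  ∑' n : ℕ, (n.factorial : ℝ)⁻¹ • (op (slicePow p q n) • x ^ n)

/-- If `x² = 0` or `pq = qp` (with `p, q, p+q` in the quadratic cone), then
`exp^x_p(q) = exp^x(p+q)`. -/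
theorem stmt13 {A : Type*} [NormedRing A] [NormedAlgebra ℝ A] [StarRing A] [StarModule ℝ A]
    [FiniteDimensional ℝ A] [Nontrivial A] [NormOneClass A]
    (hmul : ∀ j ∈ SA A, ∀ a b : A, a ∈ Cslice A j → b ∈ Cslice A j → ‖a * b‖ = ‖a‖ * ‖b‖)
    {X : Type*} [NormedRing X] [NormedAlgebra ℝ X] [CompleteSpace X]
    [Module A X] [Module Aᵐᵒᵖ X] [SMulCommClass A Aᵐᵒᵖ X]
    [IsScalarTower ℝ A X] [IsScalarTower ℝ Aᵐᵒᵖ X]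
    [IsScalarTower A X X] [SMulCommClass X Aᵐᵒᵖ X]
    (hNl : ∀ (a : A) (y : X), ‖a • y‖ ≤ ‖a‖ * ‖y‖)
    (hNr : ∀ (a : A) (y : X), ‖op a • y‖ ≤ ‖a‖ * ‖y‖)
    (x : X) {p q : A} (hp : p ∈ QA A) (hq : q ∈ QA A) (hpq : p + q ∈ QA A)
    (h : x ^ 2 = 0 ∨ p * q = q * p) :
    expAp x p q = expA x (p + q) := by
  unfold expAp expA
  refine tsum_congr fun n => ?_
  rcases h with h | h
  · match n with
    | 0 => simp [slicePow]
    | 1 => simp [slicePow, Finset.sum_range_succ, add_comm]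
    | (n + 2) =>
      have : x ^ (n + 2) = 0 := by
        rw [pow_add, h, mul_zero]
      rw [this, smul_zero, smul_zero, smul_zero, smul_zero]
  · have hc : slicePow p q n = (p + q) ^ n := by
      rw [slicePow, Commute.add_pow h n]
      refine Finset.sum_congr rfl fun k _ => ?_
      rw [nsmul_eq_mul, (Nat.cast_commute (n.choose k) (p ^ k * q ^ (n - k))).eq]
    rw [hc]
end
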